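/- Let R be a commutative ring, n a natural number, d, e : {1,…,n} × {1,…,n} → R functions, and σ an involution of {1,…,n}. Then Σ_{(σ₁,σ₂)} (−1)^{|m(σ₁)|/2} · (∏_{j < σ₁(j)} e(j, σ₁(j))) · (∏_{j < σ₂(j)} d(j, σ₂(j))) = ∏_{j < σ(j)} (d(j, σ(j)) − e(j, σ(j))), where the sum is over all ordered pairs (σ₁, σ₂) of involutions of {1,…,n} (the identity allowed) whose moved sets m(σ₁), m(σ₂) are disjoint and whose composite σ₁∘σ₂ equals σ. -/

import Mathlib

/-!
Expanding `∏_{j < σ j} (d - e)` gives `∑_S (-1)^|S| ∏_{S} e ∏_{T \ S} d` over subsets `S` of the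
set `T` of excedances `j < σ j` of `σ`, i.e. over sets of 2-cycles of `σ`. The admissible pairs
`(σ₁, σ₂)` are in bijection with these `S`: `σ₁` is `σ` on the 2-cycles in `S` and the identity
elsewhere, `σ₂` is `σ` on the remaining 2-cycles, and `S` is recovered as the excedance set of
`σ₁`. Under this bijection `|m(σ₁)| = 2|S|` and the two products match term by term.
-/

open Finset

namespace Equiv.Perm

variable {α : Type*}

theorem apply_apply_of_mul_self_eq_one {σ : Perm α} (hσ : σ * σ = 1) (x : α) : σ (σ x) = x := by
  rw [← mul_apply, hσ, one_apply]

theorem Disjoint.mul_apply_of_apply_ne {f g : Perm α} (h : f.Disjoint g) {x : α} (hx : f x ≠ x) :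
    (f * g) x = f x := by
  rw [mul_apply, (h x).resolve_left hx]

theorem Disjoint.mul_apply_of_apply_eq {f g : Perm α} (h : f.Disjoint g) {x : α} (hx : f x = x) :
    (f * g) x = g x := by
  rw [h.commute.eq, mul_apply, hx]

section Restrict

variable {σ : Perm α} {p : α → Prop} [DecidablePred p]

theorem ofSubtype_subtypePerm_apply (hp : ∀ x, p (σ x) ↔ p x) (x : α) :
    ofSubtype (σ.subtypePerm hp) x = if p x then σ x else x := by
  split_ifs with h
  · exact ofSubtype_subtypePerm_of_mem hp h
  · exact ofSubtype_subtypePerm_of_not_mem hp h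

theorem ofSubtype_subtypePerm_mul_self (hσ : σ * σ = 1) (hp : ∀ x, p (σ x) ↔ p x) :
    ofSubtype (σ.subtypePerm hp) * ofSubtype (σ.subtypePerm hp) = 1 := by
  ext x
  by_cases h : p x <;>
    simp [ofSubtype_subtypePerm_apply, h, hp, apply_apply_of_mul_self_eq_one hσ]

end Restrict

structure IsInvolutionFactorization (σ π₁ π₂ : Perm α) : Prop where
  left_mul_self : π₁ * π₁ = 1
  right_mul_self : π₂ * π₂ = 1
  right_apply_of_left_apply_ne : ∀ x, π₁ x ≠ x → π₂ x = x
  mul_eq : π₁ * π₂ = σ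

theorem isInvolutionFactorization_iff {σ π₁ π₂ : Perm α} :
    IsInvolutionFactorization σ π₁ π₂ ↔
      π₁ * π₁ = 1 ∧ π₂ * π₂ = 1 ∧ (∀ x, π₁ x ≠ x → π₂ x = x) ∧ π₁ * π₂ = σ :=
  ⟨fun ⟨h₁, h₂, hd, hσ⟩ => ⟨h₁, h₂, hd, hσ⟩, fun ⟨h₁, h₂, hd, hσ⟩ => ⟨h₁, h₂, hd, hσ⟩⟩

namespace IsInvolutionFactorization

variable {σ π₁ π₂ : Perm α}

theorem disjoint (h : IsInvolutionFactorization σ π₁ π₂) : π₁.Disjoint π₂ :=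
  fun x => or_iff_not_imp_left.2 (h.right_apply_of_left_apply_ne x)

theorem apply_of_left_apply_ne (h : IsInvolutionFactorization σ π₁ π₂) {x : α} (hx : π₁ x ≠ x) :
    σ x = π₁ x := by
  rw [← h.mul_eq, h.disjoint.mul_apply_of_apply_ne hx]

theorem apply_of_left_apply_eq (h : IsInvolutionFactorization σ π₁ π₂) {x : α} (hx : π₁ x = x) :
    σ x = π₂ x := by
  rw [← h.mul_eq, h.disjoint.mul_apply_of_apply_eq hx]

theorem apply_of_right_apply_ne (h : IsInvolutionFactorization σ π₁ π₂) {x : α} (hx : π₂ x ≠ x) :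
    σ x = π₂ x :=
  h.apply_of_left_apply_eq ((h.disjoint x).resolve_right hx)

theorem left_apply_apply_eq_iff (h : IsInvolutionFactorization σ π₁ π₂) (x : α) :
    π₁ (σ x) = σ x ↔ π₁ x = x := by
  have hcomm : Commute π₁ σ := h.mul_eq ▸ (Commute.refl π₁).mul_right h.disjoint.commute
  rw [← mul_apply, hcomm.eq, mul_apply, EmbeddingLike.apply_eq_iff_eq]

end IsInvolutionFactorization

section SplitOrbits

variable {σ : Perm α}

theorem apply_mem_or_apply_apply_mem_iff (hσ : σ * σ = 1) (S : Finset α) (x : α) :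
    σ x ∈ S ∨ σ (σ x) ∈ S ↔ x ∈ S ∨ σ x ∈ S := by
  rw [apply_apply_of_mul_self_eq_one hσ, or_comm]

variable [DecidableEq α]

/-- The factorization of `σ` whose first factor consists of the 2-cycles of `σ` meeting `S`. -/
def splitOrbits (hσ : σ * σ = 1) (S : Finset α) : Perm α × Perm α :=
  (ofSubtype (σ.subtypePerm (p := fun x => x ∈ S ∨ σ x ∈ S) (apply_mem_or_apply_apply_mem_iff hσ S)),
    ofSubtype (σ.subtypePerm (p := fun x => ¬(x ∈ S ∨ σ x ∈ S))
      fun x => (apply_mem_or_apply_apply_mem_iff hσ S x).not))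

theorem splitOrbits_fst_apply (hσ : σ * σ = 1) (S : Finset α) (x : α) :
    (splitOrbits hσ S).1 x = if x ∈ S ∨ σ x ∈ S then σ x else x :=
  ofSubtype_subtypePerm_apply _ x

theorem splitOrbits_snd_apply (hσ : σ * σ = 1) (S : Finset α) (x : α) :
    (splitOrbits hσ S).2 x = if x ∈ S ∨ σ x ∈ S then x else σ x := by
  rw [splitOrbits, ofSubtype_subtypePerm_apply, ite_not]

theorem isInvolutionFactorization_splitOrbits (hσ : σ * σ = 1) (S : Finset α) :
    IsInvolutionFactorization σ (splitOrbits hσ S).1 (splitOrbits hσ S).2 := by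
  refine ⟨ofSubtype_subtypePerm_mul_self hσ _, ofSubtype_subtypePerm_mul_self hσ _,
    fun x hx => ?_, ?_⟩
  · rw [splitOrbits_fst_apply] at hx
    rw [splitOrbits_snd_apply, if_pos (by_contra fun h => hx (if_neg h))]
  · ext x
    rw [mul_apply, splitOrbits_snd_apply]
    by_cases h : x ∈ S ∨ σ x ∈ S
    · rw [if_pos h, splitOrbits_fst_apply, if_pos h]
    · rw [if_neg h, splitOrbits_fst_apply, if_neg ((apply_mem_or_apply_apply_mem_iff hσ S x).not.2 h)]

end SplitOrbits

variable [Fintype α] [LinearOrder α]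

def excedances (τ : Perm α) : Finset α := {j | j < τ j}

theorem card_filter_apply_ne_eq_two_mul_card_excedances {τ : Perm α} (hτ : τ * τ = 1) :
    #{x | τ x ≠ x} = 2 * #(excedances τ) := by
  have hτ' := apply_apply_of_mul_self_eq_one hτ
  have h_desc : #{x | τ x < x} = #(excedances τ) :=
    card_nbij' τ τ (fun x hx => by simpa [excedances, hτ'] using hx)
      (fun x hx => by simpa [excedances, hτ'] using hx) (fun x _ => hτ' x) (fun x _ => hτ' x)
  simp_rw [ne_iff_lt_or_gt, filter_or]
  rw [card_union_of_disjoint (disjoint_filter.2 fun x _ h => lt_asymm h), h_desc, excedances,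
    two_mul]

namespace IsInvolutionFactorization

variable {σ π₁ π₂ : Perm α}

theorem excedances_left_subset (h : IsInvolutionFactorization σ π₁ π₂) :
    excedances π₁ ⊆ excedances σ := by
  intro x hx
  simp only [excedances, mem_filter, mem_univ, true_and] at hx ⊢
  rwa [h.apply_of_left_apply_ne hx.ne']

theorem excedances_right (h : IsInvolutionFactorization σ π₁ π₂) :
    excedances π₂ = excedances σ \ excedances π₁ := by
  ext x
  simp only [excedances, mem_sdiff, mem_filter, mem_univ, true_and]
  by_cases hx : π₁ x = x
  · simp [hx, h.apply_of_left_apply_eq hx]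
  · simp [h.right_apply_of_left_apply_ne x hx, h.apply_of_left_apply_ne hx]

theorem mem_excedances_left_or_iff (h : IsInvolutionFactorization σ π₁ π₂) (x : α) :
    x ∈ excedances π₁ ∨ σ x ∈ excedances π₁ ↔ π₁ x ≠ x := by
  simp only [excedances, mem_filter, mem_univ, true_and]
  by_cases hx : π₁ x = x
  · simp [hx, (h.left_apply_apply_eq_iff x).2 hx]
  · rw [h.apply_of_left_apply_ne hx, apply_apply_of_mul_self_eq_one h.left_mul_self]
    simp [eq_comm]

theorem summand_eq {R : Type*} [CommRing R] (d e : α → α → R)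
    (h : IsInvolutionFactorization σ π₁ π₂) :
    (-1 : R) ^ (#{x | π₁ x ≠ x} / 2) * (∏ j ∈ excedances π₁, e j (π₁ j)) *
        ∏ j ∈ excedances π₂, d j (π₂ j) =
      (-1) ^ #(excedances π₁) * (∏ j ∈ excedances σ \ excedances π₁, d j (σ j)) *
        ∏ j ∈ excedances π₁, e j (σ j) := by
  have he : ∀ j ∈ excedances π₁, e j (π₁ j) = e j (σ j) := fun j hj => by
    rw [h.apply_of_left_apply_ne (mem_filter.1 hj).2.ne']
  have hd : ∀ j ∈ excedances π₂, d j (π₂ j) = d j (σ j) := fun j hj => by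
    rw [h.apply_of_right_apply_ne (mem_filter.1 hj).2.ne']
  rw [card_filter_apply_ne_eq_two_mul_card_excedances h.left_mul_self,
    Nat.mul_div_cancel_left _ two_pos, prod_congr rfl he, prod_congr rfl hd, h.excedances_right,
    mul_right_comm]

end IsInvolutionFactorization

theorem excedances_splitOrbits_fst {σ : Perm α} (hσ : σ * σ = 1) {S : Finset α}
    (hS : S ⊆ excedances σ) : excedances (splitOrbits hσ S).1 = S := by
  ext x
  simp only [excedances, mem_filter, mem_univ, true_and, splitOrbits_fst_apply]
  by_cases hx : x ∈ S
  · simpa [hx] using mem_filter.1 (hS hx)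
  · have hσx : σ x ∈ S → σ x < x := fun h => by
      simpa [excedances, apply_apply_of_mul_self_eq_one hσ] using hS h
    split_ifs with h
    · simpa [hx] using (hσx (h.resolve_left hx)).le
    · simp [hx]

theorem IsInvolutionFactorization.splitOrbits_excedances_left {σ π₁ π₂ : Perm α}
    (hσ : σ * σ = 1) (h : IsInvolutionFactorization σ π₁ π₂) :
    splitOrbits hσ (excedances π₁) = (π₁, π₂) := by
  refine Prod.ext (Equiv.ext fun x => ?_) (Equiv.ext fun x => ?_)
  · rw [splitOrbits_fst_apply, if_congr (h.mem_excedances_left_or_iff x) rfl rfl]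
    split_ifs with hx
    exacts [h.apply_of_left_apply_ne hx, (not_not.1 hx).symm]
  · rw [splitOrbits_snd_apply, if_congr (h.mem_excedances_left_or_iff x) rfl rfl]
    split_ifs with hx
    exacts [(h.right_apply_of_left_apply_ne x hx).symm,
      h.apply_of_left_apply_eq (not_not.1 hx)]

end Equiv.Perm

/-- For an involution `σ` of `{1,…,n}` and coefficients `d, e`, the sum over ordered pairs
`(σ₁,σ₂)` of involutions with disjoint moved sets and `σ₁∘σ₂ = σ` of
`(−1)^{|m(σ₁)|/2} · (∏_{j<σ₁(j)} e(j,σ₁(j))) · (∏_{j<σ₂(j)} d(j,σ₂(j)))`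
equals `∏_{j<σ(j)} (d(j,σ(j)) − e(j,σ(j)))`. -/
theorem sum_pairs_involutions_eq_prod_sub {R : Type*} [CommRing R] (n : ℕ)
    (d e : Fin n → Fin n → R) (σ : Equiv.Perm (Fin n)) (hσ : σ * σ = 1) :
    (∑ π ∈ (Finset.univ : Finset (Equiv.Perm (Fin n) × Equiv.Perm (Fin n))).filter
      (fun π => π.1 * π.1 = 1 ∧ π.2 * π.2 = 1 ∧
        (∀ x, π.1 x ≠ x → π.2 x = x) ∧ π.1 * π.2 = σ),
      (-1 : R) ^ ((Finset.univ.filter (fun x => π.1 x ≠ x)).card / 2) *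
        (∏ j ∈ Finset.univ.filter (fun j => j < π.1 j), e j (π.1 j)) *
        ∏ j ∈ Finset.univ.filter (fun j => j < π.2 j), d j (π.2 j))
    = ∏ j ∈ Finset.univ.filter (fun j => j < σ j), (d j (σ j) - e j (σ j)) := by
  open Equiv.Perm in
  rw [prod_sub]
  refine sum_nbij' (fun π => excedances π.1) (splitOrbits hσ) (fun π hπ => ?_) (fun S hS => ?_)
    (fun π hπ => ?_) (fun S hS => ?_) (fun π hπ => ?_)
  · exact mem_powerset.2
      (isInvolutionFactorization_iff.2 (mem_filter.1 hπ).2).excedances_left_subset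
  · exact mem_filter.2
      ⟨mem_univ _, isInvolutionFactorization_iff.1 (isInvolutionFactorization_splitOrbits hσ S)⟩
  · exact (isInvolutionFactorization_iff.2 (mem_filter.1 hπ).2).splitOrbits_excedances_left hσ
  · exact excedances_splitOrbits_fst hσ (mem_powerset.1 hS)
  · exact (isInvolutionFactorization_iff.2 (mem_filter.1 hπ).2).summand_eq d e
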